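/- arXiv:1501.02026 — 2 statements merged into one kernel-verified Lean document; each statement's English description precedes it below -/
import Mathlib

section
/- With c(D) as defined via signed counts of concatenations of elementary paths: for any Dyck path D, c(D) = 0 if D contains a framed subpath of type (0), and otherwise c(D) = (−1)^m where m is the number of framed subpaths of D of type (−1). In particular c(D) ∈ {−1, 0, 1}. -/
open List

/-- The sequence `A 0 = 0`, `A 1 = 1`, `A (n+2) = a * A (n+1) - A n + 1` (for `a ≥ 3`
this agrees with the integer recurrence; subtraction does not truncate). -/
def AN (a : ℕ) : ℕ → ℕ
  | 0 => 0
  | 1 => 1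
  | n + 2 => a * AN a (n + 1) + 1 - AN a n

/-- Elementary path `L_{u×v}`: `u` east steps (`false`) followed by `v` north steps (`true`). -/
def L (u v : ℕ) : List Bool := List.replicate u false ++ List.replicate v true

def east (w : List Bool) : ℕ := w.count false
def north (w : List Bool) : ℕ := w.count true

/-- A word is a Dyck path (of its own size): it never goes above the diagonal. -/
def IsDyckWord (w : List Bool) : Prop :=
  ∀ p : List Bool, p <+: w → east w * north p ≤ north w * east p

/-- A Dyck path of size `r × s`. -/
def IsDyckSize (r s : ℕ) (w : List Bool) : Prop :=
  east w = r ∧ north w = s ∧ ∀ p : List Bool, p <+: w → r * north p ≤ s * east p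

def powWord (w : List Bool) (d : ℕ) : List Bool := (List.replicate d w).flatten

/-- An essential (primitive) path: not a `d`-fold concatenation of a shorter path, `d ≥ 2`. -/
def Essential (w : List Bool) : Prop :=
  w ≠ [] ∧ ∀ (w₀ : List Bool) (d : ℕ), 2 ≤ d → w ≠ powWord w₀ d

/-- The cyclic-equivalence class (orbit under rotation) of a word. -/
def Orbit (w : List Bool) : Set (List Bool) := {w' | ∃ n : ℕ, w' = w.rotate n}

/-- `L_{u×v}` is of type `(-1)`: `A n ≤ min(u,v)`, `max(u,v) < A (n+1)` with `n` even, `n > 0`. -/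
def TypeNeg (a u v : ℕ) : Prop :=
  ∃ n : ℕ, 1 ≤ n ∧ AN a (2 * n) ≤ min u v ∧ max u v < AN a (2 * n + 1)

/-- `L_{u×v}` is of type `(0)`: `A n ≤ min(u,v) < A (n+1) ≤ max(u,v)` with `n > 0`. -/
def TypeZero (a u v : ℕ) : Prop :=
  ∃ n : ℕ, 1 ≤ n ∧ AN a n ≤ min u v ∧ min u v < AN a (n + 1) ∧ AN a (n + 1) ≤ max u v

/-- `sub` occurs in `D` as a framed subpath (endpoints are 21-corners of `D`). -/
def FramedOcc (D sub : List Bool) : Prop :=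
  ∃ pre post : List Bool, D = pre ++ sub ++ post ∧
    (pre = [] ∨ ∃ p, pre = p ++ [true]) ∧ (post = [] ∨ ∃ q, post = false :: q)

def HasFramedZero (a : ℕ) (D : List Bool) : Prop :=
  ∃ u v : ℕ, TypeZero a u v ∧ FramedOcc D (L u v)

def HasFramedNeg (a : ℕ) (D : List Bool) : Prop :=
  ∃ u v : ℕ, TypeNeg a u v ∧ FramedOcc D (L u v)

/-- The number of framed subpaths of type `(-1)` of `D` (occurrences indexed by the
prefix before them together with the size `(u,v)`). -/
noncomputable def negCount (a : ℕ) (D : List Bool) : ℕ :=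
  Set.ncard {x : List Bool × ℕ × ℕ | TypeNeg a x.2.1 x.2.2 ∧
    ∃ post : List Bool, D = x.1 ++ L x.2.1 x.2.2 ++ post ∧
      (x.1 = [] ∨ ∃ p, x.1 = p ++ [true]) ∧ (post = [] ∨ ∃ q, post = false :: q)}

/-- The elementary blocks used in concatenations: `(i, false)` is `L_{A(i+1)×A i}`,
`(i, true)` is `L_{A i×A(i+1)}`. -/
def block (a : ℕ) : ℕ × Bool → List Bool
  | (i, false) => L (AN a (i + 1)) (AN a i)
  | (i, true) => L (AN a i) (AN a (i + 1))

/-- The sign of a concatenation: `(-1)^(number of blocks with odd index)`. -/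
def sgnC (s : List (ℕ × Bool)) : ℤ := (-1) ^ (s.filter (fun x => x.1 % 2 == 1)).length

/-- The set `S(D)` of concatenations of elementary blocks realizing `D`. -/
def SDyck (a : ℕ) (D : List Bool) : Set (List (ℕ × Bool)) :=
  {s | (s.map (block a)).flatten = D}

/-- The contribution multiplicity `c(D) = Σ_{s ∈ S(D)} sgn(s)`. -/
noncomputable def cMult (a : ℕ) (D : List Bool) : ℤ := ∑ᶠ s ∈ SDyck a D, sgnC s

-- The contribution multiplicity of an equivalence class, computed on a Dyck-word
-- representative (it is independent of the choice).
open Classical in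
noncomputable def cClass (a : ℕ) (C : Set (List Bool)) : ℤ :=
  if h : ∃ w, w ∈ C ∧ IsDyckWord w then cMult a h.choose else 0

/-!
Expand `c(D)` along the first block of a factorization. A leading north step can only be the block
`L_{0×1}`, so it leaves `c` unchanged. A leading elementary path `L_{U×V}` followed by an east step
is covered by east steps `L_{1×0}`, at most one block `L_{x×y}` with `x, y ≥ 1`, and north steps,
because no block crosses a 21-corner; so it multiplies `c` by `1 + Σ (-1)^i`, summed over the
blocks of index `i ≥ 1` that fit into `L_{U×V}`. With `A p ≤ U < A (p+1)` and `A q ≤ V < A (q+1)`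
these are the blocks with `i + 1 ≤ p, i ≤ q` or `i ≤ p, i + 1 ≤ q`, and the factor is `0` if
`p ≠ q` (type (0)) and `(-1)^(p+1)` if `p = q` (type (-1) exactly when `p` is even). The framed
subpaths of `D` are exactly these leading elementary paths, so both sides obey the same recursion.
-/

section Sequence

variable {a : ℕ}

lemma AN_strictMono (ha : 2 ≤ a) : StrictMono (AN a) := by
  refine strictMono_nat_of_lt_succ fun n => ?_
  induction n with
  | zero => simp [AN]
  | succ n ih =>
    show AN a (n + 1) < a * AN a (n + 1) + 1 - AN a n
    have : 2 * AN a (n + 1) ≤ a * AN a (n + 1) := Nat.mul_le_mul_right _ ha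
    omega

lemma le_AN (ha : 2 ≤ a) (n : ℕ) : n ≤ AN a n := (AN_strictMono ha).le_apply

lemma one_le_AN (ha : 2 ≤ a) {n : ℕ} (hn : 1 ≤ n) : 1 ≤ AN a n := hn.trans (le_AN ha n)

/-- The index `n` with `AN a n ≤ x < AN a (n + 1)`. -/
def floorIdx (a x : ℕ) : ℕ := Nat.findGreatest (fun n => AN a n ≤ x) x

lemma AN_le_iff_le_floorIdx (ha : 2 ≤ a) {n x : ℕ} : AN a n ≤ x ↔ n ≤ floorIdx a x := by
  constructor
  · exact fun h => Nat.le_findGreatest ((le_AN ha n).trans h) h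
  · intro h
    exact ((AN_strictMono ha).monotone h).trans
      (Nat.findGreatest_spec (P := fun n => AN a n ≤ x) (Nat.zero_le x) (Nat.zero_le x))

lemma one_le_floorIdx_iff (ha : 2 ≤ a) {x : ℕ} : 1 ≤ floorIdx a x ↔ 1 ≤ x :=
  (AN_le_iff_le_floorIdx ha (n := 1)).symm

lemma typeZero_iff (ha : 2 ≤ a) {u v : ℕ} :
    TypeZero a u v ↔ 1 ≤ min (floorIdx a u) (floorIdx a v) ∧ floorIdx a u ≠ floorIdx a v := by
  simp only [TypeZero, le_min_iff, min_lt_iff, le_max_iff]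
  simp only [← not_le, AN_le_iff_le_floorIdx ha]
  constructor
  · rintro ⟨n, _⟩
    omega
  · intro h
    exact ⟨min (floorIdx a u) (floorIdx a v), by omega⟩

lemma typeNeg_iff (ha : 2 ≤ a) {u v : ℕ} :
    TypeNeg a u v ↔ floorIdx a u = floorIdx a v ∧ 2 ≤ floorIdx a u ∧ floorIdx a u % 2 = 0 := by
  simp only [TypeNeg, le_min_iff, max_lt_iff]
  simp only [← not_le, AN_le_iff_le_floorIdx ha]
  constructor
  · rintro ⟨n, _⟩
    omega
  · intro h
    exact ⟨floorIdx a u / 2, by omega⟩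

end Sequence

section Words

lemma east_L (u v : ℕ) : east (L u v) = u := by simp [east, L, count_replicate]

lemma north_L (u v : ℕ) : north (L u v) = v := by simp [north, L, count_replicate]

lemma east_append (x y : List Bool) : east (x ++ y) = east x + east y := count_append ..

lemma north_append (x y : List Bool) : north (x ++ y) = north x + north y := count_append ..

lemma L_add_right (u v w : ℕ) : L u (v + w) = L u v ++ replicate w true := by
  rw [L, L, replicate_add, append_assoc]

lemma true_mem_L {u v : ℕ} (hv : 1 ≤ v) : true ∈ L u v := by
  simp [L, mem_replicate]; omega

lemma L_eq_false_cons {u v : ℕ} (hu : 1 ≤ u) : ∃ w, L u v = false :: w := by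
  obtain ⟨u, rfl⟩ := Nat.exists_eq_add_of_le' hu
  exact ⟨L u v, by simp [L, replicate_succ]⟩

lemma pairwise_L (u v : ℕ) : (L u v).Pairwise (· ≤ ·) := by
  simp [L, pairwise_append, pairwise_replicate]

lemma L_ne_append_true_false {u v : ℕ} {p q : List Bool} : L u v ≠ p ++ true :: false :: q := by
  intro h
  rw [show p ++ true :: false :: q = (p ++ [true]) ++ false :: q by simp] at h
  exact absurd ((pairwise_append.mp (h ▸ pairwise_L u v)).2.2 true (by simp) false (by simp))
    (by decide)

def EndsNorth (w : List Bool) : Prop := w = [] ∨ ∃ p, w = p ++ [true]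

def StartsEast (w : List Bool) : Prop := w = [] ∨ ∃ q, w = false :: q

lemma EndsNorth.append {x y : List Bool} (hx : EndsNorth x) (hy : EndsNorth y) :
    EndsNorth (x ++ y) := by
  rcases hy with rfl | ⟨p, rfl⟩
  · simpa using hx
  · exact Or.inr ⟨x ++ p, by simp⟩

lemma endsNorth_L (u : ℕ) {v : ℕ} (hv : 1 ≤ v) : EndsNorth (L u v) := by
  obtain ⟨v, rfl⟩ := Nat.exists_eq_add_of_le' hv
  exact Or.inr ⟨L u v, by rw [L_add_right]; rfl⟩

lemma startsEast_iff_head? {w : List Bool} : StartsEast w ↔ w.head? ≠ some true := by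
  rcases w with _ | ⟨_ | _, w⟩ <;> simp [StartsEast]

/-- A cut of `L U V ++ y'` at a 21-corner lies at or after the end of `L U V`. -/
lemma exists_of_append_eq_L_append {U V : ℕ} {p y y' : List Bool} (hy : StartsEast y)
    (h : p ++ [true] ++ y = L U V ++ y') : ∃ m, p ++ [true] = L U V ++ m ∧ y' = m ++ y := by
  rcases append_eq_append_iff.mp h with ⟨m, hL, rfl⟩ | h
  · rcases m with _ | ⟨c, m⟩
    · exact ⟨[], by simpa using hL.symm, rfl⟩
    · rcases hy with hy | ⟨q, hy⟩
      · simp at hy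
      · obtain rfl : c = false := (cons.inj hy).1
        exact absurd (by simpa using hL) L_ne_append_true_false
  · exact h

lemma L_append_inj {u v U V : ℕ} {post E : List Bool} (hv : 1 ≤ v) (hV : 1 ≤ V)
    (hpost : StartsEast post) (hE : StartsEast E) (h : L u v ++ post = L U V ++ E) :
    u = U ∧ v = V ∧ post = E := by
  obtain ⟨p, hp⟩ : ∃ p, L u v = p ++ [true] :=
    (endsNorth_L u hv).resolve_left (by simp [L]; omega)
  obtain ⟨P, hP⟩ : ∃ p, L U V = p ++ [true] :=
    (endsNorth_L U hV).resolve_left (by simp [L]; omega)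
  obtain ⟨m, hm, hEm⟩ := exists_of_append_eq_L_append hpost (hp ▸ h)
  obtain ⟨m', hm', -⟩ := exists_of_append_eq_L_append hE (hP ▸ h.symm)
  have hlen := congrArg length (hp ▸ hm)
  have hlen' := congrArg length (hP ▸ hm')
  simp only [length_append] at hlen hlen'
  obtain rfl : m = [] := length_eq_zero_iff.mp (by omega)
  rw [← hp, append_nil] at hm
  exact ⟨by simpa [east_L] using congrArg east hm, by simpa [north_L] using congrArg north hm,
    by simpa using hEm.symm⟩

lemma L_prefix_L_append_iff {x y U V : ℕ} {E : List Bool} (hy : 1 ≤ y) (hV : 1 ≤ V)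
    (hE : StartsEast E) : L x y <+: L U V ++ E ↔ x = U ∧ y ≤ V := by
  constructor
  · rintro ⟨r, h⟩
    rcases append_eq_append_iff.mp h with ⟨m, hL, -⟩ | ⟨m, hL, rfl⟩
    · have hm : false ∉ m := fun hf => absurd ((pairwise_append.mp (hL ▸ pairwise_L U V)).2.2
        true (true_mem_L hy) false hf) (by decide)
      have he : east m = 0 := count_eq_zero.mpr hm
      have hU := congrArg east hL
      have hV := congrArg north hL
      simp only [east_append, east_L, north_append, north_L] at hU hV
      omega
    · rcases m with _ | ⟨c, m⟩
      · simp only [append_nil] at hL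
        exact ⟨by simpa [east_L] using congrArg east hL,
          by simpa [north_L] using (congrArg north hL).le⟩
      · rcases hE with hE | ⟨q, hE⟩
        · simp at hE
        · obtain rfl : c = false := (cons.inj hE).1
          obtain ⟨P, hP⟩ : ∃ p, L U V = p ++ [true] :=
            (endsNorth_L U hV).resolve_left (by simp [L]; omega)
          exact absurd (by simpa [hP] using hL) L_ne_append_true_false
  · rintro ⟨rfl, hyV⟩
    obtain ⟨w, rfl⟩ := Nat.exists_eq_add_of_le hyV
    exact ⟨replicate w true ++ E, by rw [L_add_right, append_assoc]⟩

lemma exists_eq_replicate_append (b : Bool) (D : List Bool) :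
    ∃ n R, D = replicate n b ++ R ∧ R.head? ≠ some b := by
  induction D with
  | nil => exact ⟨0, [], rfl, by simp⟩
  | cons c D ih =>
    by_cases hc : c = b
    · obtain ⟨n, R, rfl, hR⟩ := ih
      exact ⟨n + 1, R, by simp [hc, replicate_succ], hR⟩
    · exact ⟨0, c :: D, rfl, by simpa using hc⟩

@[elab_as_elim]
lemma induction_L_append {motive : List Bool → Prop}
    (cons_true : ∀ D, motive D → motive (true :: D))
    (replicate_false : ∀ U, motive (replicate U false))
    (L_append : ∀ U V E, 1 ≤ U → 1 ≤ V → StartsEast E → motive E → motive (L U V ++ E))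
    (D : List Bool) : motive D := by
  induction h : D.length using Nat.strong_induction_on generalizing D with
  | _ n ih =>
    rcases D with _ | ⟨_ | _, D⟩
    · exact replicate_false 0
    · obtain ⟨U, R, hD, hR⟩ := exists_eq_replicate_append false (false :: D)
      have hU : 1 ≤ U := by
        by_contra h0
        rw [show U = 0 by omega, replicate_zero, nil_append] at hD
        subst hD
        simp at hR
      rcases R with _ | ⟨_ | _, R⟩
      · rw [hD, append_nil]
        exact replicate_false U
      · simp at hR
      · obtain ⟨V, E, hR', hE⟩ := exists_eq_replicate_append true (true :: R)
        have hV : 1 ≤ V := by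
          by_contra h0
          rw [show V = 0 by omega, replicate_zero, nil_append] at hR'
          subst hR'
          simp at hE
        rw [hD, hR', ← append_assoc]
        refine L_append U V E hU hV (startsEast_iff_head?.mpr hE) (ih _ ?_ E rfl)
        have := congrArg length (hD.trans (congrArg _ hR'))
        simp only [length_append, length_replicate] at this
        omega
    · exact cons_true D (ih _ (by simp [← h]) D rfl)

end Words

section Occurrences

lemma EndsNorth.of_append {x y : List Bool} (h : EndsNorth (x ++ y)) : EndsNorth y := by
  rcases y.eq_nil_or_concat with rfl | ⟨y, c, rfl⟩
  · exact Or.inl rfl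
  · rcases h with h | ⟨p, h⟩
    · simp at h
    · simp only [concat_eq_append, ← append_assoc] at h
      obtain rfl : c = true := by simpa using (append_inj' h rfl).2
      exact Or.inr ⟨y, by simp⟩

/-- `w` occurs in `D` right after the prefix `pre`, with both endpoints 21-corners of `D`. -/
def FramedAt (D pre w : List Bool) : Prop :=
  ∃ post, D = pre ++ w ++ post ∧ EndsNorth pre ∧ StartsEast post

lemma framedAt_cons_true_iff {D pre w : List Bool} (hw : ∃ w', w = false :: w') :
    FramedAt (true :: D) pre w ↔ ∃ pre', pre = true :: pre' ∧ FramedAt D pre' w := by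
  obtain ⟨w, rfl⟩ := hw
  constructor
  · rintro ⟨post, h, hpre, hpost⟩
    rcases pre with _ | ⟨c, pre⟩
    · simp at h
    · simp only [cons_append, cons.injEq] at h
      obtain ⟨rfl, rfl⟩ := h
      exact ⟨pre, rfl, post, rfl, EndsNorth.of_append (x := [true]) hpre, hpost⟩
  · rintro ⟨pre, rfl, post, rfl, hpre, hpost⟩
    exact ⟨post, rfl, EndsNorth.append (Or.inr ⟨[], rfl⟩) hpre, hpost⟩

lemma not_framedAt_replicate_false {U : ℕ} {pre w : List Bool} (hw : true ∈ w) :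
    ¬ FramedAt (replicate U false) pre w := by
  rintro ⟨post, h, -⟩
  have : true ∈ replicate U false := h ▸ mem_append_left _ (mem_append_right _ hw)
  simp [mem_replicate] at this

lemma framedAt_L_append_iff {u v U V : ℕ} {E pre : List Bool} (hu : 1 ≤ u) (hv : 1 ≤ v)
    (hV : 1 ≤ V) (hE : StartsEast E) :
    FramedAt (L U V ++ E) pre (L u v) ↔
      (pre = [] ∧ u = U ∧ v = V) ∨ ∃ pre', pre = L U V ++ pre' ∧ FramedAt E pre' (L u v) := by
  constructor
  · rintro ⟨post, h, hpre | ⟨p, rfl⟩, hpost⟩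
    · subst hpre
      obtain ⟨rfl, rfl, -⟩ := L_append_inj hv hV hpost hE (by simpa using h.symm)
      exact Or.inl ⟨rfl, rfl, rfl⟩
    · obtain ⟨w, hw⟩ := L_eq_false_cons (v := v) hu
      obtain ⟨m, hm, rfl⟩ := exists_of_append_eq_L_append (y := L u v ++ post)
        (Or.inr ⟨w ++ post, by rw [hw, cons_append]⟩) (by simpa using h.symm)
      have hmN : EndsNorth m := EndsNorth.of_append (x := L U V) (hm ▸ Or.inr ⟨p, rfl⟩)
      exact Or.inr ⟨m, hm, post, by simp, hmN, hpost⟩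
  · rintro (⟨rfl, rfl, rfl⟩ | ⟨pre, rfl, post, rfl, hpre, hpost⟩)
    · exact ⟨E, by simp, Or.inl rfl, hE⟩
    · exact ⟨post, by simp, (endsNorth_L U hV).append hpre, hpost⟩

/-- Encoded as in `negCount`, so that `negCount a D = (framedOccs (TypeNeg a) D).ncard` holds by
definition. -/
def framedOccs (T : ℕ → ℕ → Prop) (D : List Bool) : Set (List Bool × ℕ × ℕ) :=
  {x | T x.2.1 x.2.2 ∧ FramedAt D x.1 (L x.2.1 x.2.2)}

variable {T : ℕ → ℕ → Prop}

lemma framedOccs_finite (D : List Bool) : (framedOccs T D).Finite := by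
  refine (D.inits.toFinset.finite_toSet.prod
    ((Set.finite_Iic D.length).prod (Set.finite_Iic D.length))).subset ?_
  rintro ⟨pre, u, v⟩ ⟨-, post, rfl, -⟩
  simp only [Set.mem_prod, Finset.mem_coe, mem_toFinset, mem_inits, Set.mem_Iic, length_append,
    L, length_replicate, append_assoc]
  exact ⟨prefix_append _ _, by omega, by omega⟩

lemma framedOccs_cons_true (hT : ∀ u v, T u v → 1 ≤ u) (D : List Bool) :
    framedOccs T (true :: D) = Prod.map (true :: ·) id '' framedOccs T D := by
  ext ⟨pre, u, v⟩
  constructor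
  · rintro ⟨huv, hF⟩
    obtain ⟨pre', rfl, hF'⟩ := (framedAt_cons_true_iff (L_eq_false_cons (hT u v huv))).mp hF
    exact ⟨(pre', u, v), ⟨huv, hF'⟩, rfl⟩
  · rintro ⟨⟨pre, u, v⟩, ⟨huv, hF⟩, hx⟩
    simp only [Prod.map, id, Prod.mk.injEq] at hx
    obtain ⟨rfl, rfl, rfl⟩ := hx
    exact ⟨huv, (framedAt_cons_true_iff (L_eq_false_cons (hT u v huv))).mpr ⟨pre, rfl, hF⟩⟩

lemma framedOccs_replicate_false (hT : ∀ u v, T u v → 1 ≤ v) (U : ℕ) :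
    framedOccs T (replicate U false) = ∅ :=
  Set.eq_empty_of_forall_notMem fun _ ⟨huv, hF⟩ =>
    not_framedAt_replicate_false (true_mem_L (hT _ _ huv)) hF

lemma framedOccs_L_append (hT : ∀ u v, T u v → 1 ≤ u ∧ 1 ≤ v) {U V : ℕ} {E : List Bool}
    (hV : 1 ≤ V) (hE : StartsEast E) :
    framedOccs T (L U V ++ E) =
      {x | x = ([], U, V) ∧ T U V} ∪ Prod.map (L U V ++ ·) id '' framedOccs T E := by
  ext ⟨pre, u, v⟩
  constructor
  · rintro ⟨huv, hF⟩
    obtain ⟨hu, hv⟩ := hT u v huv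
    rcases (framedAt_L_append_iff hu hv hV hE).mp hF with ⟨rfl, rfl, rfl⟩ | ⟨pre', rfl, hF'⟩
    · exact Or.inl ⟨rfl, huv⟩
    · exact Or.inr ⟨(pre', u, v), ⟨huv, hF'⟩, rfl⟩
  · rintro (⟨hx, huv⟩ | ⟨⟨pre, u, v⟩, ⟨huv, hF⟩, hx⟩)
    · simp only [Prod.mk.injEq] at hx
      obtain ⟨rfl, rfl, rfl⟩ := hx
      obtain ⟨hU, -⟩ := hT _ _ huv
      exact ⟨huv, (framedAt_L_append_iff hU hV hV hE).mpr (Or.inl ⟨rfl, rfl, rfl⟩)⟩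
    · simp only [Prod.map, id, Prod.mk.injEq] at hx
      obtain ⟨rfl, rfl, rfl⟩ := hx
      obtain ⟨hu, hv⟩ := hT u v huv
      exact ⟨huv, (framedAt_L_append_iff hu hv hV hE).mpr (Or.inr ⟨pre, rfl, hF⟩)⟩

end Occurrences

section FramedCounts

variable {a : ℕ}

lemma TypeZero.one_le (ha : 2 ≤ a) {u v : ℕ} (h : TypeZero a u v) : 1 ≤ u ∧ 1 ≤ v := by
  have h := ((typeZero_iff ha).mp h).1
  exact ⟨(one_le_floorIdx_iff ha).mp (by omega), (one_le_floorIdx_iff ha).mp (by omega)⟩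

lemma TypeNeg.one_le (ha : 2 ≤ a) {u v : ℕ} (h : TypeNeg a u v) : 1 ≤ u ∧ 1 ≤ v := by
  have h := (typeNeg_iff ha).mp h
  exact ⟨(one_le_floorIdx_iff ha).mp (by omega), (one_le_floorIdx_iff ha).mp (by omega)⟩

lemma hasFramedZero_iff_nonempty {D : List Bool} :
    HasFramedZero a D ↔ (framedOccs (TypeZero a) D).Nonempty :=
  ⟨fun ⟨u, v, h, pre, post, hD, hpre, hpost⟩ => ⟨(pre, u, v), h, post, hD, hpre, hpost⟩,
    fun ⟨⟨pre, u, v⟩, h, post, hD, hpre, hpost⟩ => ⟨u, v, h, pre, post, hD, hpre, hpost⟩⟩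

lemma negCount_eq_ncard (D : List Bool) : negCount a D = (framedOccs (TypeNeg a) D).ncard := rfl

lemma hasFramedZero_cons_true (ha : 2 ≤ a) (D : List Bool) :
    HasFramedZero a (true :: D) ↔ HasFramedZero a D := by
  rw [hasFramedZero_iff_nonempty, hasFramedZero_iff_nonempty,
    framedOccs_cons_true (fun _ _ h => (h.one_le ha).1), Set.image_nonempty]

lemma negCount_cons_true (ha : 2 ≤ a) (D : List Bool) :
    negCount a (true :: D) = negCount a D := by
  rw [negCount_eq_ncard, negCount_eq_ncard, framedOccs_cons_true (fun _ _ h => (h.one_le ha).1),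
    Set.ncard_image_of_injective _ (cons_injective.prodMap Function.injective_id)]

lemma not_hasFramedZero_replicate_false (ha : 2 ≤ a) (U : ℕ) :
    ¬ HasFramedZero a (replicate U false) := by
  rw [hasFramedZero_iff_nonempty, framedOccs_replicate_false (fun _ _ h => (h.one_le ha).2)]
  exact Set.not_nonempty_empty

lemma negCount_replicate_false (ha : 2 ≤ a) (U : ℕ) : negCount a (replicate U false) = 0 := by
  rw [negCount_eq_ncard, framedOccs_replicate_false (fun _ _ h => (h.one_le ha).2),
    Set.ncard_empty]

lemma hasFramedZero_L_append (ha : 2 ≤ a) {U V : ℕ} {E : List Bool} (hV : 1 ≤ V)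
    (hE : StartsEast E) :
    HasFramedZero a (L U V ++ E) ↔ TypeZero a U V ∨ HasFramedZero a E := by
  rw [hasFramedZero_iff_nonempty, hasFramedZero_iff_nonempty,
    framedOccs_L_append (fun _ _ h => h.one_le ha) hV hE, Set.union_nonempty, Set.image_nonempty]
  simp [Set.Nonempty]

open scoped Classical in
lemma negCount_L_append (ha : 2 ≤ a) {U V : ℕ} {E : List Bool} (hV : 1 ≤ V)
    (hE : StartsEast E) :
    negCount a (L U V ++ E) = (if TypeNeg a U V then 1 else 0) + negCount a E := by
  have hdisj : Disjoint {x : List Bool × ℕ × ℕ | x = ([], U, V) ∧ TypeNeg a U V}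
      (Prod.map (L U V ++ ·) id '' framedOccs (TypeNeg a) E) := by
    refine Set.disjoint_left.mpr ?_
    rintro _ ⟨rfl, -⟩ ⟨y, -, hy⟩
    simp only [Prod.map, Prod.mk.injEq, append_eq_nil_iff] at hy
    simp [L] at hy
    omega
  rw [negCount_eq_ncard, negCount_eq_ncard, framedOccs_L_append (fun _ _ h => h.one_le ha) hV hE,
    Set.ncard_union_eq hdisj ((Set.finite_singleton _).subset fun _ hx => hx.1)
      ((framedOccs_finite E).image _),
    Set.ncard_image_of_injective _ ((append_right_injective _).prodMap Function.injective_id)]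
  split_ifs with h <;> simp [h]

end FramedCounts

section Factorizations

variable {a : ℕ}

lemma sgnC_cons (p : ℕ × Bool) (s : List (ℕ × Bool)) : sgnC (p :: s) = (-1) ^ p.1 * sgnC s := by
  rw [sgnC, sgnC, filter_cons, neg_one_pow_eq_pow_mod_two (n := p.1)]
  rcases Nat.mod_two_eq_zero_or_one p.1 with h | h <;> simp [h, pow_succ, mul_comm]

lemma block_zero (b : Bool) : block a (0, b) = [b] := by
  cases b <;> rfl

lemma block_eq_L (p : ℕ × Bool) : block a p = L (east (block a p)) (north (block a p)) := by
  rcases p with ⟨i, _ | _⟩ <;> simp [block, east_L, north_L]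

lemma fst_le_east_block (ha : 2 ≤ a) (p : ℕ × Bool) : p.1 ≤ east (block a p) := by
  rcases p with ⟨i, _ | _⟩ <;> simp only [block, east_L]
  · exact (Nat.le_succ i).trans (le_AN ha _)
  · exact le_AN ha i

lemma fst_lt_length_block (ha : 2 ≤ a) (p : ℕ × Bool) : p.1 < (block a p).length := by
  rcases p with ⟨i, _ | _⟩ <;> simp only [block, L, length_append, length_replicate] <;>
    have := le_AN ha (i + 1) <;> omega

lemma one_le_east_north_block (ha : 2 ≤ a) {p : ℕ × Bool} (hp : 1 ≤ p.1) :
    1 ≤ east (block a p) ∧ 1 ≤ north (block a p) := by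
  rcases p with ⟨i, _ | _⟩ <;> simp only [block, east_L, north_L] at hp ⊢ <;>
    exact ⟨one_le_AN ha (by omega), one_le_AN ha (by omega)⟩

lemma exists_block_eq_L (ha : 2 ≤ a) (i : ℕ) (b : Bool) :
    ∃ x y, 1 ≤ x ∧ 1 ≤ y ∧ block a (i + 1, b) = L x y :=
  ⟨_, _, (one_le_east_north_block ha (Nat.le_add_left 1 i)).1,
    (one_le_east_north_block ha (Nat.le_add_left 1 i)).2, block_eq_L _⟩

lemma blockPrefixes_cons_true (ha : 2 ≤ a) (D : List Bool) :
    {p | block a p <+: true :: D} = {(0, true)} := by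
  ext ⟨_ | i, b⟩
  · cases b <;> simp [block_zero]
  · obtain ⟨x, y, hx, -, hb⟩ := exists_block_eq_L ha i b
    obtain ⟨w, hw⟩ := L_eq_false_cons (v := y) hx
    simp [hb, hw]

lemma blockPrefixes_replicate_false (ha : 2 ≤ a) (U : ℕ) :
    {p | block a p <+: replicate (U + 1) false} = {(0, false)} := by
  ext ⟨_ | i, b⟩
  · cases b <;> simp [block_zero, replicate_succ]
  · obtain ⟨x, y, -, hy, hb⟩ := exists_block_eq_L ha i b
    simp only [Set.mem_ofPred_eq, hb, Set.mem_singleton_iff, Prod.mk.injEq, reduceCtorEq,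
      false_and, iff_false]
    intro h
    simpa [mem_replicate] using h.subset (true_mem_L hy)

lemma SDyck_nil (ha : 2 ≤ a) : SDyck a [] = {[]} := by
  ext (_ | ⟨p, s⟩)
  · simp [SDyck]
  · simp only [SDyck, Set.mem_ofPred_eq, map_cons, flatten_cons, append_eq_nil_iff,
      Set.mem_singleton_iff, reduceCtorEq, iff_false, not_and]
    intro h
    have := fst_lt_length_block ha p
    simp [h] at this

lemma SDyck_eq_biUnion {D : List Bool} (hD : D ≠ []) :
    SDyck a D = ⋃ p ∈ {p | block a p <+: D}, (p :: ·) '' SDyck a (D.drop (block a p).length) := by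
  ext (_ | ⟨p, s⟩)
  · simp [SDyck, hD.symm]
  · simp only [SDyck, Set.mem_ofPred_eq, map_cons, flatten_cons, Set.mem_iUnion, Set.mem_image,
      cons.injEq, exists_prop]
    constructor
    · rintro rfl
      exact ⟨p, prefix_append _ _, s, by simp, rfl, rfl⟩
    · rintro ⟨_, hp, _, hs, rfl, rfl⟩
      rw [hs]
      exact prefix_iff_eq_append.mp hp

lemma blockPrefixes_finite (ha : 2 ≤ a) (D : List Bool) : {p | block a p <+: D}.Finite :=
  ((Set.finite_Iic D.length).prod Set.finite_univ).subset fun p hp =>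
    ⟨((fst_lt_length_block ha p).trans_le hp.length_le).le, trivial⟩

lemma SDyck_finite (ha : 2 ≤ a) (D : List Bool) : (SDyck a D).Finite := by
  induction h : D.length using Nat.strong_induction_on generalizing D with
  | _ n ih =>
    rcases eq_or_ne D [] with rfl | hD
    · simp [SDyck_nil ha]
    · rw [SDyck_eq_biUnion hD]
      refine (blockPrefixes_finite ha D).biUnion fun p _ => (ih _ ?_ _ rfl).image _
      have := fst_lt_length_block ha p
      have : D.length ≠ 0 := by simpa using hD
      rw [length_drop]
      omega

lemma cMult_nil (ha : 2 ≤ a) : cMult a [] = 1 := by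
  rw [cMult, SDyck_nil ha, finsum_mem_singleton]
  rfl

lemma cMult_eq_finsum (ha : 2 ≤ a) {D : List Bool} (hD : D ≠ []) :
    cMult a D = ∑ᶠ p ∈ {p | block a p <+: D},
      (-1) ^ p.1 * cMult a (D.drop (block a p).length) := by
  rw [cMult, SDyck_eq_biUnion hD, finsum_mem_biUnion _ (blockPrefixes_finite ha D)
    fun p _ => (SDyck_finite ha _).image _]
  · refine finsum_mem_congr rfl fun p _ => ?_
    rw [finsum_mem_image cons_injective.injOn, cMult, mul_finsum_mem]
    exact finsum_mem_congr rfl fun s _ => sgnC_cons p s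
  · intro p _ q _ hpq
    refine Set.disjoint_left.mpr ?_
    rintro _ ⟨s, -, rfl⟩ ⟨t, -, h⟩
    exact hpq (cons.inj h).1.symm

end Factorizations

section CornerWeight

variable {a : ℕ}

lemma cMult_cons_true (ha : 2 ≤ a) (D : List Bool) : cMult a (true :: D) = cMult a D := by
  rw [cMult_eq_finsum ha (cons_ne_nil _ _), blockPrefixes_cons_true ha, finsum_mem_singleton,
    block_zero]
  simp

lemma cMult_replicate_true_append (ha : 2 ≤ a) (V : ℕ) (E : List Bool) :
    cMult a (replicate V true ++ E) = cMult a E := by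
  induction V with
  | zero => rfl
  | succ V ih => rw [replicate_succ, cons_append, cMult_cons_true ha, ih]

lemma cMult_replicate_false (ha : 2 ≤ a) (U : ℕ) : cMult a (replicate U false) = 1 := by
  induction U with
  | zero => exact cMult_nil ha
  | succ U ih =>
    rw [cMult_eq_finsum ha (by simp), blockPrefixes_replicate_false ha, finsum_mem_singleton,
      block_zero, replicate_succ]
    simpa using ih

def blocksFitting (a U V : ℕ) : Set (ℕ × Bool) :=
  {p | 1 ≤ p.1 ∧ east (block a p) ≤ U ∧ north (block a p) ≤ V}

lemma blocksFitting_finite (ha : 2 ≤ a) (U V : ℕ) : (blocksFitting a U V).Finite :=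
  ((Set.finite_Iic U).prod Set.finite_univ).subset fun p hp =>
    ⟨(fst_le_east_block ha p).trans hp.2.1, trivial⟩

lemma blockPrefixes_L_append (ha : 2 ≤ a) {U V : ℕ} {E : List Bool} (hV : 1 ≤ V)
    (hE : StartsEast E) :
    {p | block a p <+: L (U + 1) V ++ E} =
      insert (0, false) (blocksFitting a (U + 1) V \ blocksFitting a U V) := by
  obtain ⟨w, hw⟩ := L_eq_false_cons (v := V) (Nat.le_add_left 1 U)
  ext ⟨_ | i, b⟩
  · cases b <;> simp [block_zero, blocksFitting, hw]
  · have hL := block_eq_L (a := a) (i + 1, b)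
    have := one_le_east_north_block ha (p := (i + 1, b)) (Nat.le_add_left 1 i)
    rw [Set.mem_ofPred_eq, hL, L_prefix_L_append_iff this.2 hV hE]
    simp only [Set.mem_insert_iff, Prod.mk.injEq, Set.mem_sdiff, blocksFitting, Set.mem_ofPred_eq]
    omega

noncomputable def cornerWeight (a U V : ℕ) : ℤ := 1 + ∑ᶠ p ∈ blocksFitting a U V, (-1) ^ p.1

lemma cMult_L_append (ha : 2 ≤ a) {V : ℕ} {E : List Bool} (hV : 1 ≤ V) (hE : StartsEast E)
    (U : ℕ) : cMult a (L U V ++ E) = cornerWeight a U V * cMult a E := by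
  induction U with
  | zero =>
    have : blocksFitting a 0 V = ∅ :=
      Set.eq_empty_of_forall_notMem fun p hp => by
        have := one_le_east_north_block ha hp.1
        have := hp.2.1
        omega
    rw [cornerWeight, this, finsum_mem_empty, add_zero, one_mul]
    exact cMult_replicate_true_append ha V E
  | succ U ih =>
    have hnew : ∀ p ∈ blocksFitting a (U + 1) V \ blocksFitting a U V,
        (-1) ^ p.1 * cMult a ((L (U + 1) V ++ E).drop (block a p).length) =
          (-1) ^ p.1 * cMult a E := by
      rintro p ⟨⟨hi, hx, hy⟩, hp⟩
      obtain ⟨k, hk⟩ := Nat.exists_eq_add_of_le hy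
      have hx : east (block a p) = U + 1 := by
        by_contra
        exact hp ⟨hi, by omega, hy⟩
      rw [block_eq_L p, hx, hk, L_add_right, append_assoc, drop_left,
        cMult_replicate_true_append ha]
    have hsub : blocksFitting a U V ⊆ blocksFitting a (U + 1) V :=
      fun p ⟨hi, hx, hy⟩ => ⟨hi, by omega, hy⟩
    have hdrop : (L (U + 1) V ++ E).drop [false].length = L U V ++ E := by
      simp [L, replicate_succ]
    rw [cMult_eq_finsum ha (by simp [L, replicate_succ]), blockPrefixes_L_append ha hV hE,
      finsum_mem_insert _ (fun h => absurd h.1.1 (by decide)) (blocksFitting_finite ha _ _).sdiff,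
      finsum_mem_congr rfl hnew, ← finsum_mem_mul,
      block_zero, hdrop, ih, cornerWeight, cornerWeight,
      ← finsum_mem_add_sdiff hsub (blocksFitting_finite ha _ _)]
    ring

lemma sum_Icc_neg_one_pow (k : ℕ) : ∑ i ∈ Finset.Icc 1 k, (-1 : ℤ) ^ i = -((k % 2 : ℕ) : ℤ) := by
  induction k with
  | zero => simp
  | succ k ih =>
    rw [Finset.sum_Icc_succ_top (by omega), ih, neg_one_pow_eq_pow_mod_two]
    rcases Nat.mod_two_eq_zero_or_one k with h | h <;>
      simp [h, Nat.succ_mod_two_eq_one_iff.mpr, Nat.succ_mod_two_eq_zero_iff.mpr]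

lemma blocksFitting_eq (ha : 2 ≤ a) (U V : ℕ) :
    blocksFitting a U V =
      (·, false) '' Set.Icc 1 (min (floorIdx a U - 1) (floorIdx a V)) ∪
        (·, true) '' Set.Icc 1 (min (floorIdx a U) (floorIdx a V - 1)) := by
  ext ⟨i, _ | _⟩ <;>
    simp [blocksFitting, block, east_L, north_L, AN_le_iff_le_floorIdx ha] <;> omega

open scoped Classical in
lemma cornerWeight_eq (ha : 2 ≤ a) {U V : ℕ} (hU : 1 ≤ U) (hV : 1 ≤ V) :
    cornerWeight a U V = if TypeZero a U V then 0 else if TypeNeg a U V then -1 else 1 := by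
  have hdisj : Disjoint ((·, false) '' Set.Icc 1 (min (floorIdx a U - 1) (floorIdx a V)))
      ((·, true) '' Set.Icc 1 (min (floorIdx a U) (floorIdx a V - 1))) := by
    simp [Set.disjoint_left]
  rw [cornerWeight, blocksFitting_eq ha,
    finsum_mem_union hdisj ((Set.finite_Icc _ _).image _) ((Set.finite_Icc _ _).image _),
    finsum_mem_image (Prod.mk_left_injective _).injOn,
    finsum_mem_image (Prod.mk_left_injective _).injOn, ← Finset.coe_Icc, ← Finset.coe_Icc,
    finsum_mem_coe_finset, finsum_mem_coe_finset, sum_Icc_neg_one_pow, sum_Icc_neg_one_pow,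
    typeZero_iff ha, typeNeg_iff ha]
  have := (one_le_floorIdx_iff ha).mpr hU
  have := (one_le_floorIdx_iff ha).mpr hV
  split_ifs <;> omega

end CornerWeight

section Main

variable {a : ℕ}

open scoped Classical in
lemma cMult_eq_ite (ha : 2 ≤ a) (D : List Bool) :
    cMult a D = if HasFramedZero a D then 0 else (-1) ^ negCount a D := by
  induction D using induction_L_append with
  | cons_true D ih =>
    rw [cMult_cons_true ha, hasFramedZero_cons_true ha, negCount_cons_true ha, ih]
  | replicate_false U =>
    rw [cMult_replicate_false ha, if_neg (not_hasFramedZero_replicate_false ha U),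
      negCount_replicate_false ha, pow_zero]
  | L_append U V E hU hV hE ih =>
    rw [cMult_L_append ha hV hE, cornerWeight_eq ha hU hV, hasFramedZero_L_append ha hV hE,
      negCount_L_append ha hV hE, ih]
    by_cases hZ : TypeZero a U V <;> by_cases hE0 : HasFramedZero a E <;>
      by_cases hN : TypeNeg a U V <;> simp [hZ, hE0, hN, add_comm 1, pow_succ]

end Main

theorem stmt11_general (a : ℕ) (ha : 3 ≤ a) (D : List Bool) :
    (HasFramedZero a D → cMult a D = 0) ∧
    (¬ HasFramedZero a D → cMult a D = (-1) ^ negCount a D) ∧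
    (cMult a D = -1 ∨ cMult a D = 0 ∨ cMult a D = 1) := by
  classical
  have hc := cMult_eq_ite (by omega : 2 ≤ a) D
  refine ⟨fun h => by rw [hc, if_pos h], fun h => by rw [hc, if_neg h], ?_⟩
  rw [hc]
  split_ifs
  · exact Or.inr (Or.inl rfl)
  · rcases neg_one_pow_eq_or ℤ (negCount a D) with h | h <;> simp [h]

/-- `c(D) = 0` if `D` contains a framed subpath of type `(0)`, and otherwise
`c(D) = (-1)^(number of framed subpaths of type (-1))`; in particular
`c(D) ∈ {-1, 0, 1}`. -/
theorem stmt11 (a : ℕ) (ha : 3 ≤ a) (D : List Bool) (hD : IsDyckWord D) :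
    (HasFramedZero a D → cMult a D = 0) ∧
    (¬ HasFramedZero a D → cMult a D = (-1) ^ negCount a D) ∧
    (cMult a D = -1 ∨ cMult a D = 0 ∨ cMult a D = 1) :=
  stmt11_general a ha D
end

section
/- For an elementary Dyck path L_{u×v} of type (−1) in H(a) (a ≥ 3), assuming u ≤ v one has 1 ≤ v/u < a, and there exists an essential Dyck path M_{u×v} of size u × v that contains no framed subpaths of type (−1) or of type (0). -/
open List

/-!
A path of type (−1) has `a + 1 = A 2 ≤ u` and `v < A (2n+1) ≤ a A (2n) ≤ a u`, so `v / u < a`.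
For `M` take `E N^{c₀} E N^{c₁} ⋯ E N^{c_{u-1}}` with runs `cᵢ ∈ {q, q + 1}`, `q = v / u`
(the first run possibly `q - 1`), ordered so that the partial sums stay strictly below the
chord of slope `v / u`. Then `M` is a Dyck path meeting the diagonal only at its ends, hence
essential. Its north runs have length at most `q + 1 ≤ a` and its east runs length at most `2`,
whereas every framed subpath of type (−1) or (0) has a side of length at least `A 2 = a + 1`.
-/

section AN

variable {a : ℕ}

lemma AN_two (a : ℕ) : AN a 2 = a + 1 := by simp [AN]

lemma AN_lt_AN_succ (ha : 2 ≤ a) (n : ℕ) : AN a n < AN a (n + 1) := by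
  induction n with
  | zero => simp [AN]
  | succ n ih =>
    have hrec : AN a (n + 1 + 1) = a * AN a (n + 1) + 1 - AN a n := rfl
    have : 2 * AN a (n + 1) ≤ a * AN a (n + 1) := Nat.mul_le_mul_right _ ha
    omega

lemma add_one_le_AN (ha : 2 ≤ a) {n : ℕ} (hn : 2 ≤ n) : a + 1 ≤ AN a n :=
  AN_two a ▸ (AN_strictMono ha).monotone hn

lemma AN_succ_le_mul (ha : 2 ≤ a) {n : ℕ} (hn : 2 ≤ n) : AN a (n + 1) ≤ a * AN a n := by
  obtain ⟨m, rfl⟩ : ∃ m, n = m + 1 := ⟨n - 1, by omega⟩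
  have hrec : AN a (m + 1 + 1) = a * AN a (m + 1) + 1 - AN a m := rfl
  have : AN a 1 ≤ AN a m := (AN_strictMono ha).monotone (by omega)
  simp only [AN] at this
  omega

lemma TypeNeg.add_one_le_min {u v : ℕ} (ha : 2 ≤ a) (h : TypeNeg a u v) : a + 1 ≤ min u v := by
  obtain ⟨n, hn, hmin, -⟩ := h
  exact (add_one_le_AN ha (by omega)).trans hmin

lemma TypeNeg.lt_mul {u v : ℕ} (ha : 2 ≤ a) (huv : u ≤ v) (h : TypeNeg a u v) : v < a * u := by
  obtain ⟨n, hn, hmin, hmax⟩ := h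
  rw [min_eq_left huv] at hmin
  rw [max_eq_right huv] at hmax
  calc v < AN a (2 * n + 1) := hmax
    _ ≤ a * AN a (2 * n) := AN_succ_le_mul ha (by omega)
    _ ≤ a * u := Nat.mul_le_mul_left a hmin

lemma TypeZero.add_one_le_max {u v : ℕ} (ha : 2 ≤ a) (h : TypeZero a u v) : a + 1 ≤ max u v := by
  obtain ⟨n, hn, -, -, hmax⟩ := h
  exact (add_one_le_AN ha (by omega)).trans hmax

end AN

lemma FramedOcc.isInfix {D sub : List Bool} (h : FramedOcc D sub) : sub <:+: D := by
  obtain ⟨pre, post, rfl, -⟩ := h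
  exact infix_append pre sub post

def StrictlyBelowChord (cs : List ℕ) : Prop :=
  ∀ i, 0 < i → i < cs.length → cs.length * (cs.take i).sum < cs.sum * i

lemma StrictlyBelowChord.le {cs : List ℕ} (h : StrictlyBelowChord cs) {i : ℕ}
    (hi : i ≤ cs.length) : cs.length * (cs.take i).sum ≤ cs.sum * i := by
  rcases Nat.eq_zero_or_pos i with rfl | hi0
  · simp
  rcases hi.lt_or_eq with hlt | rfl
  · exact (h i hi0 hlt).le
  · rw [take_length, mul_comm]

lemma strictlyBelowChord_cons_replicate {c₀ q k r : ℕ} (hc₀ : c₀ ≤ q) (h : c₀ < q ∨ 0 < r) :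
    StrictlyBelowChord (c₀ :: (replicate k q ++ replicate r (q + 1))) := by
  intro i hi0 hi
  obtain ⟨j, rfl⟩ : ∃ j, i = j + 1 := ⟨i - 1, by omega⟩
  obtain ⟨d, rfl⟩ : ∃ d, q = c₀ + d := ⟨q - c₀, by omega⟩
  simp only [length_cons, length_append, length_replicate] at hi
  simp only [length_cons, length_append, length_replicate, take_succ_cons, take_append,
    take_replicate, sum_cons, sum_append, sum_replicate, length_replicate, smul_eq_mul]
  rcases le_or_gt j k with hj | hj
  · obtain ⟨e, rfl⟩ : ∃ e, k = j + e := ⟨k - j, by omega⟩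
    rw [min_eq_left hj, Nat.sub_eq_zero_of_le hj, Nat.zero_min, zero_mul, add_zero]
    have hpos : 0 < e * d + r * (d + j + 1) := by
      rcases Nat.eq_zero_or_pos r with rfl | hr
      · simp only [lt_add_iff_pos_right, lt_self_iff_false, or_false] at h
        exact Nat.add_pos_left (Nat.mul_pos (by omega) h) _
      · exact Nat.add_pos_right _ (Nat.mul_pos hr (by omega))
    nlinarith
  · obtain ⟨t, rfl⟩ : ∃ t, j = k + t := ⟨j - k, by omega⟩
    rw [min_eq_right (by omega), Nat.add_sub_cancel_left, min_eq_left (by omega)]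
    obtain ⟨s, rfl⟩ : ∃ s, r = t + s + 1 := ⟨r - t - 1, by omega⟩
    nlinarith

lemma exists_runs_strictlyBelowChord {u v : ℕ} (hu : 2 ≤ u) (huv : u ≤ v) :
    ∃ cs : List ℕ, cs.length = u ∧ cs.sum = v ∧ (∀ c ∈ cs, c ≤ v / u + 1) ∧
      (∀ c ∈ cs.tail, 0 < c) ∧ StrictlyBelowChord cs := by
  set q := v / u
  have hq : 1 ≤ q := (Nat.one_le_div_iff (by omega)).mpr huv
  have hr : v % u < u := Nat.mod_lt _ (by omega)
  have hdiv : u * q + v % u = v := Nat.div_add_mod v u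
  generalize v % u = r at hr hdiv
  -- when `u ∣ v` the first run must be `q - 1`, or the path would touch the diagonal
  obtain ⟨c₀, k, s, hc₀, hlt, hlen, hsum⟩ : ∃ c₀ k s, c₀ ≤ q ∧ (c₀ < q ∨ 0 < s) ∧
      k + s + 1 = u ∧ c₀ + k * q + s * (q + 1) = v := by
    obtain ⟨p, hp⟩ : ∃ p, q = p + 1 := ⟨q - 1, by omega⟩
    rw [hp] at hdiv ⊢
    rcases Nat.eq_zero_or_pos r with rfl | hr0
    · obtain ⟨w, rfl⟩ : ∃ w, u = w + 2 := ⟨u - 2, by omega⟩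
      exact ⟨p, w, 1, by omega, by omega, by omega, by linarith⟩
    · obtain ⟨k, rfl⟩ : ∃ k, u = k + r + 1 := ⟨u - r - 1, by omega⟩
      exact ⟨p + 1, k, r, le_rfl, Or.inr hr0, rfl, by linarith⟩
  refine ⟨c₀ :: (replicate k q ++ replicate s (q + 1)), by simp [← hlen], ?_, ?_, ?_,
    strictlyBelowChord_cons_replicate hc₀ hlt⟩
  · simp [sum_replicate, ← hsum, add_assoc]
  · simp only [mem_cons, mem_append, mem_replicate]
    omega
  · simp only [tail_cons, mem_append, mem_replicate]
    omega

-- `IsChain` for `x || y` says that no two east steps are adjacent.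
lemma le_one_of_isChain_or_replicate_false {m : ℕ}
    (h : IsChain (fun x y : Bool => (x || y) = true) (replicate m false)) : m ≤ 1 := by
  match m, h with
  | 0, _ | 1, _ => omega
  | m + 2, h => simp [replicate_succ, isChain_cons_cons] at h

def pathOfRuns (cs : List ℕ) : List Bool := (cs.map fun c => false :: replicate c true).flatten

namespace pathOfRuns

@[simp] lemma nil : pathOfRuns [] = [] := rfl

lemma cons (c : ℕ) (cs : List ℕ) :
    pathOfRuns (c :: cs) = false :: (replicate c true ++ pathOfRuns cs) := rfl

@[simp] lemma east_eq (cs : List ℕ) : east (pathOfRuns cs) = cs.length := by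
  induction cs with
  | nil => rfl
  | cons c cs ih => simp [east, cons, count_replicate, ← ih]

@[simp] lemma north_eq (cs : List ℕ) : north (pathOfRuns cs) = cs.sum := by
  induction cs with
  | nil => rfl
  | cons c cs ih => simp [north, cons, ← ih]

lemma north_le_sum_take_of_prefix {cs : List ℕ} {p : List Bool} (hp : p <+: pathOfRuns cs) :
    north p ≤ (cs.take (east p)).sum := by
  induction cs generalizing p with
  | nil => simp_all [north]
  | cons c cs ih =>
    have hblock : false :: replicate c true <+: pathOfRuns (c :: cs) := ⟨pathOfRuns cs, rfl⟩
    rcases prefix_or_prefix_of_prefix hp hblock with hp' | ⟨p', rfl⟩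
    · rcases prefix_cons_iff.mp hp' with rfl | ⟨t, rfl, ht⟩
      · simp [north]
      obtain ⟨htlen, ht⟩ := prefix_replicate_iff.mp ht
      rw [ht]
      simpa [north, east, count_replicate] using htlen
    · have hp' : p' <+: pathOfRuns cs := by
        rwa [cons, ← cons_append, prefix_append_right_inj] at hp
      have := ih hp'
      simp only [north, east, count_append, count_cons, count_replicate] at this ⊢
      simp [take_succ_cons, add_comm, this]

lemma isDyckSize {cs : List ℕ} (h : StrictlyBelowChord cs) :
    IsDyckSize cs.length cs.sum (pathOfRuns cs) := by
  refine ⟨east_eq cs, north_eq cs, fun p hp => ?_⟩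
  have heast : east p ≤ cs.length := east_eq cs ▸ hp.sublist.count_le false
  calc cs.length * north p ≤ cs.length * (cs.take (east p)).sum :=
        Nat.mul_le_mul_left _ (north_le_sum_take_of_prefix hp)
    _ ≤ cs.sum * east p := h.le heast

lemma essential {cs : List ℕ} (hne : cs ≠ []) (h : StrictlyBelowChord cs) :
    Essential (pathOfRuns cs) := by
  refine ⟨fun hnil => hne (length_eq_zero_iff.mp (by simpa [hnil, east] using (east_eq cs).symm)),
    fun w d hd hw => ?_⟩
  have hcount (b : Bool) : (pathOfRuns cs).count b = d * w.count b := by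
    simp [hw, powWord, count_flatten]
  have heast : cs.length = d * east w := by rw [← east_eq, east, hcount]; rfl
  have hnorth : cs.sum = d * north w := by rw [← north_eq, north, hcount]; rfl
  have hpos : 0 < east w := Nat.pos_of_ne_zero fun h0 => hne (by simp_all)
  have hprefix : w <+: pathOfRuns cs := by
    obtain ⟨d, rfl⟩ : ∃ d', d = d' + 1 := ⟨d - 1, by omega⟩
    exact ⟨powWord w d, by rw [hw]; rfl⟩
  have hbelow := h (east w) hpos (by rw [heast]; nlinarith)
  have hle := Nat.mul_le_mul_left cs.length (north_le_sum_take_of_prefix hprefix)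
  rw [heast] at hbelow hle
  rw [hnorth] at hbelow
  nlinarith

lemma length_le_of_replicate_true_infix {cs : List ℕ} {K m : ℕ} (hK : ∀ c ∈ cs, c ≤ K)
    (h : replicate m true <:+: pathOfRuns cs) : m ≤ K := by
  induction cs with
  | nil =>
    have := h.length_le
    simp_all
  | cons c cs ih =>
    rw [cons, infix_cons_iff] at h
    rcases h with h | h
    · rcases prefix_cons_iff.mp h with h | ⟨t, ht, -⟩
      · simp_all
      · cases m <;> simp_all [replicate_succ]
    rcases infix_append_iff_ne_nil.mp h with h | h | ⟨l₁, l₂, -, hl₂, hsplit, -, hpre⟩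
    · exact (by simpa using h.length_le : m ≤ c).trans (hK c mem_cons_self)
    · exact ih (fun c' hc' => hK c' (mem_cons_of_mem c hc')) h
    · -- the run cannot reach past the `false` that starts the next block
      exfalso
      obtain ⟨b, l₂', rfl⟩ := exists_cons_of_ne_nil hl₂
      cases cs with
      | nil => simp at hpre
      | cons c' cs' =>
        rw [cons, cons_prefix_cons] at hpre
        have : b ∈ replicate m true := hsplit ▸ mem_append_right l₁ mem_cons_self
        simp [eq_of_mem_replicate this] at hpre

lemma isChain_or_replicate_true_append {cs : List ℕ} (hpos : ∀ c ∈ cs, 0 < c) (k : ℕ) :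
    IsChain (fun x y : Bool => (x || y) = true) (replicate k true ++ pathOfRuns cs) := by
  induction cs generalizing k with
  | nil => simpa using isChain_replicate_of_rel (r := fun x y : Bool => (x || y) = true) k rfl
  | cons c cs ih =>
    obtain ⟨c, rfl⟩ : ∃ c', c = c' + 1 := ⟨c - 1, by have := hpos c mem_cons_self; omega⟩
    refine .append (isChain_replicate_of_rel k rfl) ?_ (by simp [getLast?_replicate])
    rw [cons, isChain_cons]
    exact ⟨by simp [replicate_succ],
      ih (fun c' hc' => hpos c' (mem_cons_of_mem _ hc')) (c + 1)⟩

lemma length_le_two_of_replicate_false_infix {cs : List ℕ} {m : ℕ}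
    (hpos : ∀ c ∈ cs.tail, 0 < c) (h : replicate m false <:+: pathOfRuns cs) : m ≤ 2 := by
  cases cs with
  | nil =>
    have := h.length_le
    simp_all
  | cons c cs =>
    have hchain := isChain_or_replicate_true_append hpos c
    rw [cons, infix_cons_iff] at h
    rcases h with h | h
    · cases m with
      | zero => omega
      | succ m =>
        rw [replicate_succ, cons_prefix_cons] at h
        have := le_one_of_isChain_or_replicate_false (hchain.prefix h.2)
        omega
    · have := le_one_of_isChain_or_replicate_false (hchain.infix h)
      omega

end pathOfRuns

/-- For an elementary path `L_{u×v}` of type `(-1)` with `u ≤ v`, one has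
`1 ≤ v/u < a`, and there is an essential Dyck path `M` of size `u × v`
containing no framed subpaths of type `(-1)` or of type `(0)`. -/
theorem stmt12 (a u v : ℕ) (ha : 3 ≤ a) (huv : u ≤ v) (ht : TypeNeg a u v) :
    (0 < u ∧ v < a * u) ∧
    ∃ M : List Bool, IsDyckSize u v M ∧ Essential M ∧
      ¬ HasFramedNeg a M ∧ ¬ HasFramedZero a M := by
  have ha2 : 2 ≤ a := by omega
  have hu : a + 1 ≤ u := min_eq_left huv ▸ ht.add_one_le_min ha2
  have hv : v < a * u := ht.lt_mul ha2 huv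
  have hq : v / u + 1 ≤ a := (Nat.div_lt_iff_lt_mul (by omega)).mpr (by linarith)
  refine ⟨⟨by omega, hv⟩, ?_⟩
  obtain ⟨cs, rfl, rfl, hle, hpos, hbelow⟩ := exists_runs_strictlyBelowChord (by omega) huv
  have hL {u' v' : ℕ} (h : L u' v' <:+: pathOfRuns cs) : max u' v' ≤ a := by
    have hu' := pathOfRuns.length_le_two_of_replicate_false_infix hpos
      ((infix_append_left).trans h)
    have hv' := pathOfRuns.length_le_of_replicate_true_infix (fun c hc => (hle c hc).trans hq)
      ((infix_append_right).trans h)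
    omega
  refine ⟨pathOfRuns cs, pathOfRuns.isDyckSize hbelow,
    pathOfRuns.essential (ne_nil_of_length_pos (by omega)) hbelow, ?_, ?_⟩
  · rintro ⟨u', v', hneg, hocc⟩
    have := hL hocc.isInfix
    have := hneg.add_one_le_min ha2
    omega
  · rintro ⟨u', v', hzero, hocc⟩
    have := hL hocc.isInfix
    have := hzero.add_one_le_max ha2
    omega
end
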